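/- arXiv:1708.07162 — 4 statements merged into one kernel-verified Lean document; each statement's English description precedes it below -/
import Mathlib

section
/- Let δ ∈ (0,1] and τ̄ > 0. There exists a constant C (depending on δ and τ̄) such that for every positive integer n and every integer m with 0 ≤ m ≤ √n, ∑_{k=1}^{n} k^{-(1+δ)/2} · (1 + (n - m - k τ̄)²/k)^{-1} ≤ C n^{-δ/2}. -/
/-!
Put `a = n - m`, so that `a ≥ n / 2` once `n ≥ 4`. The summand equals
`k ^ ((1 - δ) / 2) / (k + (a - k τ̄) ^ 2) ≤ n ^ ((1 - δ) / 2) / (k + (a - k τ̄) ^ 2)`.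
Where `k τ̄ ≥ a / 2`, the denominator dominates `a / (2 τ̄) + τ̄ ^ 2 (a / τ̄ - k) ^ 2`, a discrete
Lorentzian of height `≍ 1 / n` and width `≍ √n`, whose sum is `O(n ^ (-1/2))` by telescoping;
where `k τ̄ < a / 2`, one has `(a - k τ̄) ^ 2 ≥ a ^ 2 / 4`, so these at most `n` terms contribute
`O(1 / n)`. Altogether the sum is `O(n ^ ((1 - δ) / 2) · n ^ (-1/2)) = O(n ^ (-δ / 2))`.
-/

open Finset

lemma sum_comp_le_of_injOn {f : ℕ → ℝ} {A : ℝ} (hf : ∀ i, 0 ≤ f i)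
    (hA : ∀ M, ∑ i ∈ range M, f i ≤ A) {s : Finset ℕ} {g : ℕ → ℕ} (hg : Set.InjOn g s) :
    ∑ k ∈ s, f (g k) ≤ A := by
  obtain ⟨M, hM⟩ := exists_nat_subset_range (s.image g)
  rw [← sum_image hg]
  exact (sum_le_sum_of_subset_of_nonneg hM fun i _ _ ↦ hf i).trans (hA M)

lemma sum_comp_abs_sub_le {f : ℝ → ℝ} {A : ℝ} (hf : AntitoneOn f (Set.Ici 0))
    (hf0 : ∀ i : ℕ, 0 ≤ f i) (hA : ∀ M, ∑ i ∈ range M, f i ≤ A) (κ : ℝ) (s : Finset ℕ) :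
    ∑ k ∈ s, f |κ - k| ≤ 2 * A := by
  set k₀ := ⌈κ⌉₊
  rw [← sum_filter_add_sum_filter_not s (k₀ ≤ ·), two_mul]
  gcongr
  · calc ∑ k ∈ s with k₀ ≤ k, f |κ - k| ≤ ∑ k ∈ s with k₀ ≤ k, f ↑(k - k₀) := by
          refine sum_le_sum fun k hk ↦ hf (by simp) (by simp) ?_
          have hk : k₀ ≤ k := (mem_filter.1 hk).2
          have hκ := Nat.le_ceil κ
          rw [Nat.cast_sub hk, abs_sub_comm]
          exact (sub_le_sub_left hκ _).trans (le_abs_self _)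
      _ ≤ A := sum_comp_le_of_injOn hf0 hA fun k hk l hl h ↦ by
          simp only [coe_filter, Set.mem_ofPred_eq] at hk hl
          omega
  · calc ∑ k ∈ s with ¬k₀ ≤ k, f |κ - k| ≤ ∑ k ∈ s with ¬k₀ ≤ k, f ↑(k₀ - 1 - k) := by
          refine sum_le_sum fun k hk ↦ hf (by simp) (by simp) ?_
          have hk : k < k₀ := not_le.1 (mem_filter.1 hk).2
          have hκ : ((k₀ - 1 : ℕ) : ℝ) < κ := Nat.lt_ceil.1 (by omega)
          rw [Nat.cast_sub (by omega)]
          exact (sub_le_sub_right hκ.le _).trans (le_abs_self _)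
      _ ≤ A := sum_comp_le_of_injOn hf0 hA fun k hk l hl h ↦ by
          simp only [coe_filter, Set.mem_ofPred_eq] at hk hl
          omega

lemma inv_add_mul_sq_succ_le {s t : ℝ} (hs : 0 < s) (ht : 0 < t) (x : ℝ) (hx : 0 ≤ x) :
    (s ^ 2 + t ^ 2 * (x + 1) ^ 2)⁻¹ ≤ 2 / (t * (s + t * x)) - 2 / (t * (s + t * (x + 1))) := by
  have h₁ : 0 < s + t * x := by positivity
  have h₂ : 0 < s + t * (x + 1) := by positivity
  rw [div_sub_div _ _ (by positivity) (by positivity), inv_eq_one_div,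
    div_le_div_iff₀ (by positivity) (by positivity)]
  nlinarith [sq_nonneg (s - t * (x + 1)), mul_pos ht h₁, mul_pos ht h₂]

lemma sum_range_inv_add_mul_sq_le {B c : ℝ} (hB : 0 < B) (hc : 0 < c) (M : ℕ) :
    ∑ i ∈ range M, (B + c * (i : ℝ) ^ 2)⁻¹ ≤ 1 / B + 2 / √(B * c) := by
  obtain ⟨s, hs, rfl⟩ : ∃ s, 0 < s ∧ s ^ 2 = B := ⟨√B, by positivity, Real.sq_sqrt hB.le⟩
  obtain ⟨t, ht, rfl⟩ : ∃ t, 0 < t ∧ t ^ 2 = c := ⟨√c, by positivity, Real.sq_sqrt hc.le⟩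
  set g : ℕ → ℝ := fun i ↦ 2 / (t * (s + t * i))
  have hsqrt : √(s ^ 2 * t ^ 2) = s * t := by
    rw [← mul_pow, Real.sqrt_sq (by positivity)]
  cases M with
  | zero => simp only [sum_range_zero]; positivity
  | succ M =>
    calc ∑ i ∈ range (M + 1), (s ^ 2 + t ^ 2 * (i : ℝ) ^ 2)⁻¹
        = ∑ i ∈ range M, (s ^ 2 + t ^ 2 * ((i : ℝ) + 1) ^ 2)⁻¹ + 1 / s ^ 2 := by
          rw [sum_range_succ']; push_cast; simp
      _ ≤ ∑ i ∈ range M, (g i - g (i + 1)) + 1 / s ^ 2 := by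
          gcongr with i
          simpa [g] using inv_add_mul_sq_succ_le hs ht i i.cast_nonneg
      _ = 1 / s ^ 2 + 2 / (s * t) - g M := by
          rw [sum_range_sub']; simp only [g, CharP.cast_eq_zero]; field_simp; ring
      _ ≤ 1 / s ^ 2 + 2 / √(s ^ 2 * t ^ 2) := by
          rw [hsqrt]; linarith [show 0 ≤ g M by positivity]

lemma sum_inv_add_mul_sq_sub_le {B c : ℝ} (hB : 0 < B) (hc : 0 < c) (κ : ℝ) (s : Finset ℕ) :
    ∑ k ∈ s, (B + c * (κ - k) ^ 2)⁻¹ ≤ 2 * (1 / B + 2 / √(B * c)) := by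
  have hf : AntitoneOn (fun y : ℝ ↦ (B + c * y ^ 2)⁻¹) (Set.Ici 0) := fun x hx y _ hxy ↦ by
    simp only
    gcongr
  simpa only [sq_abs] using
    sum_comp_abs_sub_le hf (fun i ↦ by positivity) (sum_range_inv_add_mul_sq_le hB hc) κ s

lemma inv_add_sq_sub_mul_le {a τ x : ℝ} (ha : 0 < a) (hτ : 0 < τ) (hx : 0 ≤ x) :
    (x + (a - x * τ) ^ 2)⁻¹ ≤ (a / (2 * τ) + τ ^ 2 * (a / τ - x) ^ 2)⁻¹ + 4 / a ^ 2 := by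
  have hsq : τ ^ 2 * (a / τ - x) ^ 2 = (a - x * τ) ^ 2 := by field_simp
  rw [hsq]
  by_cases hfar : a / 2 ≤ x * τ
  · have : a / (2 * τ) ≤ x := by rw [div_le_iff₀ (by positivity)]; linarith
    have : (x + (a - x * τ) ^ 2)⁻¹ ≤ (a / (2 * τ) + (a - x * τ) ^ 2)⁻¹ := by gcongr
    linarith [show 0 ≤ 4 / a ^ 2 by positivity]
  · have : a ^ 2 / 4 ≤ x + (a - x * τ) ^ 2 := by nlinarith
    have : (x + (a - x * τ) ^ 2)⁻¹ ≤ 4 / a ^ 2 := by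
      rw [← inv_div]; gcongr
    linarith [show 0 ≤ (a / (2 * τ) + (a - x * τ) ^ 2)⁻¹ by positivity]

lemma sum_inv_add_sq_sub_mul_le_of_half_le {a τ : ℝ} (hτ : 0 < τ) {n : ℕ} (hn : 0 < n)
    (ha : (n : ℝ) / 2 ≤ a) :
    ∑ k ∈ Icc 1 n, ((k : ℝ) + (a - k * τ) ^ 2)⁻¹ ≤ (16 + 8 * τ + 8 / √τ) / √n := by
  have hn₁ : (1 : ℝ) ≤ n := by exact_mod_cast hn
  have ha₀ : 0 < a := by linarith
  set r := √(n : ℝ)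
  have hr₁ : 1 ≤ r := Real.one_le_sqrt.2 hn₁
  have hr : r ^ 2 = n := Real.sq_sqrt (by positivity)
  have hBc : r * √τ / 2 ≤ √(a / (2 * τ) * τ ^ 2) := by
    rw [Real.le_sqrt (by positivity) (by positivity), div_pow, mul_pow, hr,
      Real.sq_sqrt hτ.le]
    field_simp
    nlinarith
  have hlocal : 2 * (1 / (a / (2 * τ)) + 2 / √(a / (2 * τ) * τ ^ 2)) ≤ (8 * τ + 8 / √τ) / r := by
    have h₁ : 4 * τ / a ≤ 8 * τ / r := by
      have : r ≤ 2 * a := by nlinarith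
      rw [div_le_div_iff₀ ha₀ (by positivity)]; nlinarith
    have h₂ : 4 / √(a / (2 * τ) * τ ^ 2) ≤ 8 / √τ / r := by
      rw [div_div, div_le_div_iff₀ (by positivity) (by positivity)]; nlinarith
    calc 2 * (1 / (a / (2 * τ)) + 2 / √(a / (2 * τ) * τ ^ 2))
        = 4 * τ / a + 4 / √(a / (2 * τ) * τ ^ 2) := by field_simp; ring
      _ ≤ (8 * τ + 8 / √τ) / r := by rw [add_div]; linarith
  have hfar : n * (4 / a ^ 2) ≤ 16 / r := by
    rw [mul_div_assoc', div_le_div_iff₀ (by positivity) (by positivity), ← hr]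
    nlinarith [mul_le_mul ha ha (by positivity) ha₀.le]
  calc ∑ k ∈ Icc 1 n, ((k : ℝ) + (a - k * τ) ^ 2)⁻¹
      ≤ ∑ k ∈ Icc 1 n, ((a / (2 * τ) + τ ^ 2 * (a / τ - k) ^ 2)⁻¹ + 4 / a ^ 2) :=
        sum_le_sum fun k _ ↦ inv_add_sq_sub_mul_le ha₀ hτ k.cast_nonneg
    _ = ∑ k ∈ Icc 1 n, (a / (2 * τ) + τ ^ 2 * (a / τ - k) ^ 2)⁻¹ + n * (4 / a ^ 2) := by
        rw [sum_add_distrib, sum_const, Nat.card_Icc, nsmul_eq_mul, Nat.add_sub_cancel]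
    _ ≤ (8 * τ + 8 / √τ) / r + 16 / r := by
        gcongr
        exact (sum_inv_add_mul_sq_sub_le (by positivity) (by positivity) _ _).trans hlocal
    _ = (16 + 8 * τ + 8 / √τ) / r := by ring

lemma sum_Icc_inv_add_sq_le (n : ℕ) (y : ℕ → ℝ) : ∑ k ∈ Icc 1 n, ((k : ℝ) + y k ^ 2)⁻¹ ≤ n := by
  have h : ∀ k ∈ Icc 1 n, ((k : ℝ) + y k ^ 2)⁻¹ ≤ 1 := fun k hk ↦ by
    have : (1 : ℝ) ≤ k := by exact_mod_cast (mem_Icc.1 hk).1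
    exact inv_le_one_of_one_le₀ (by nlinarith [sq_nonneg (y k)])
  simpa using sum_le_card_nsmul _ _ 1 h

lemma sum_inv_add_sq_sub_mul_le {τ : ℝ} (hτ : 0 < τ) {n : ℕ} (hn : 0 < n) {m : ℕ}
    (hm : (m : ℝ) ≤ √n) :
    ∑ k ∈ Icc 1 n, ((k : ℝ) + (n - m - k * τ) ^ 2)⁻¹ ≤ (16 + 8 * τ + 8 / √τ) / √n := by
  by_cases ha : (n : ℝ) / 2 ≤ n - m
  · exact sum_inv_add_sq_sub_mul_le_of_half_le hτ hn ha
  · -- then `√n > n / 2`, so `n < 4` and the trivial bound `n` suffices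
    have hr : √(n : ℝ) ^ 2 = n := Real.sq_sqrt n.cast_nonneg
    have hr₀ : 0 < √(n : ℝ) := by positivity
    have hr₂ : √(n : ℝ) < 2 := by nlinarith
    calc ∑ k ∈ Icc 1 n, ((k : ℝ) + (n - m - k * τ) ^ 2)⁻¹ ≤ n := sum_Icc_inv_add_sq_le n _
      _ ≤ 16 / √n := by rw [le_div_iff₀ hr₀]; nlinarith
      _ ≤ (16 + 8 * τ + 8 / √τ) / √n := by gcongr; linarith [show 0 ≤ 8 * τ + 8 / √τ by positivity]

lemma rpow_mul_inv_one_add_div_le {x y N δ : ℝ} (hx : 0 < x) (hxN : x ≤ N) (hy : 0 ≤ y)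
    (hδ : δ ≤ 1) : x ^ (-(1 + δ) / 2) * (1 + y / x)⁻¹ ≤ N ^ ((1 - δ) / 2) * (x + y)⁻¹ := by
  have hsplit : x ^ (-(1 + δ) / 2) = x ^ ((1 - δ) / 2) * x⁻¹ := by
    rw [← Real.rpow_neg_one, ← Real.rpow_add hx]; ring_nf
  have hinv : x⁻¹ * (1 + y / x)⁻¹ = (x + y)⁻¹ := by
    rw [← mul_inv]; congr 1; field_simp
  rw [hsplit, mul_assoc, hinv]
  gcongr

theorem sum_semilocal_bound (δ τbar : ℝ) (hδ : δ ∈ Set.Ioc (0:ℝ) 1) (hτ : 0 < τbar) :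
    ∃ C : ℝ, 0 < C ∧ ∀ n : ℕ, 0 < n → ∀ m : ℕ, (m : ℝ) ≤ Real.sqrt n →
      ∑ k ∈ Finset.Icc 1 n,
          (k : ℝ) ^ (-(1 + δ) / 2) * (1 + ((n : ℝ) - m - k * τbar) ^ 2 / k)⁻¹
        ≤ C * (n : ℝ) ^ (-δ / 2) := by
  refine ⟨16 + 8 * τbar + 8 / √τbar, by positivity, fun n hn m hm ↦ ?_⟩
  have hn₀ : (0 : ℝ) < n := by exact_mod_cast hn
  calc ∑ k ∈ Icc 1 n, (k : ℝ) ^ (-(1 + δ) / 2) * (1 + ((n : ℝ) - m - k * τbar) ^ 2 / k)⁻¹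
      ≤ ∑ k ∈ Icc 1 n, (n : ℝ) ^ ((1 - δ) / 2) * ((k : ℝ) + (n - m - k * τbar) ^ 2)⁻¹ := by
        refine sum_le_sum fun k hk ↦ ?_
        obtain ⟨hk₁, hkn⟩ := mem_Icc.1 hk
        exact rpow_mul_inv_one_add_div_le (by positivity) (by exact_mod_cast hkn) (sq_nonneg _)
          hδ.2
    _ ≤ (n : ℝ) ^ ((1 - δ) / 2) * ((16 + 8 * τbar + 8 / √τbar) / √n) := by
        rw [← mul_sum]; gcongr; exact sum_inv_add_sq_sub_mul_le hτ hn hm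
    _ = (16 + 8 * τbar + 8 / √τbar) * (n : ℝ) ^ (-δ / 2) := by
        rw [mul_div_assoc', mul_comm, mul_div_assoc, Real.sqrt_eq_rpow (n : ℝ),
          ← Real.rpow_sub hn₀]
        ring_nf
end

section
/- Let τ̄ > 1 and c > 0. Define y_{k,n,m} = (n - m - k τ̄)/√k for positive integers k, n and integers m. Then there is a constant C (depending on c and τ̄) such that for all n ≥ 1, sup_{0 ≤ m ≤ √n} ∑_{k=1}^{n} (1/k) e^{-c y_{k,n,m}²} ≤ C/√n. -/
/-!
Since `exp (-u) ≤ 1 / (1 + u)`, the `k`-th term is at most `1 / (k + c x_k²)` with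
`x_k = n - m - k τ̄`. As `m ≤ √n`, either `k ≥ n / (16 τ̄)` or `x_k ≥ n / 2`, and in both cases
`k + c x_k² ≥ δ (n + x_k²)` for a fixed `δ > 0`. The `x_k` form an arithmetic progression of
step `τ̄`, so, reflected at the index where `x_k` changes sign, `∑ 1 / (n + x_k²)` splits into two
sums `∑ₛ 1 / (n + τ̄² s²) ≤ 1 / n + 3 / (τ̄ √n)`: the terms with `s ≤ √n / τ̄` are at most `1 / n`,
the others at most `1 / (τ̄² s²)`.
-/

open Finset Real

theorem one_div_mul_exp_neg_mul_div_sqrt_sq_le {k c : ℝ} (hk : 0 < k) (hc : 0 ≤ c) (x : ℝ) :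
    1 / k * exp (-c * (x / √k) ^ 2) ≤ 1 / (k + c * x ^ 2) := by
  rw [div_pow, sq_sqrt hk.le, neg_mul, ← mul_div_assoc, exp_neg]
  calc 1 / k * (exp (c * x ^ 2 / k))⁻¹ ≤ 1 / k * (c * x ^ 2 / k + 1)⁻¹ := by
        gcongr; exact add_one_le_exp _
    _ = 1 / (k + c * x ^ 2) := by field_simp; ring

theorem sum_range_one_div_add_mul_sq_le {A B : ℝ} (hA : 0 < A) (hB : 0 < B) (N : ℕ) :
    ∑ s ∈ range N, 1 / (A + B * s ^ 2) ≤ 1 / A + 3 / √(A * B) := by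
  set r := √(A / B)
  set q := √(A * B)
  set S := ⌊r⌋₊
  have hSr : (S : ℝ) ≤ r := Nat.floor_le (sqrt_nonneg _)
  have hrS : r < S + 1 := Nat.lt_floor_add_one r
  have hr : 0 < r := by positivity
  have hq : 0 < q := by positivity
  have hrq : r * q = A := by
    rw [← sqrt_mul (by positivity), show A / B * (A * B) = A ^ 2 by field_simp, sqrt_sq hA.le]
  have hBr : B * r = q := by
    have : q ^ 2 = A * B := sq_sqrt (by positivity)
    nlinarith
  have hM : S + 1 ≤ max N (S + 1) := le_max_right _ _
  calc ∑ s ∈ range N, 1 / (A + B * s ^ 2)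
      ≤ ∑ s ∈ range (max N (S + 1)), 1 / (A + B * s ^ 2) :=
        sum_le_sum_of_subset_of_nonneg (range_mono (le_max_left _ _)) fun _ _ _ => by positivity
    _ = ∑ s ∈ range (S + 1), 1 / (A + B * s ^ 2)
          + ∑ s ∈ Ioo S (max N (S + 1)), 1 / (A + B * s ^ 2) := by
        rw [← sum_range_add_sum_Ico _ hM, Ico_add_one_left_eq_Ioo]
    _ ≤ ∑ s ∈ range (S + 1), 1 / A + ∑ s ∈ Ioo S (max N (S + 1)), 1 / B * ((s : ℝ) ^ 2)⁻¹ := by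
        gcongr with s _ s hs
        · exact le_add_of_nonneg_right (by positivity)
        · have : (0 : ℝ) < s := by
            simp only [mem_Ioo] at hs; exact_mod_cast hs.1.trans_le' (Nat.zero_le S)
          rw [one_div_mul_eq_div, ← one_div, div_div, mul_comm]
          gcongr
          exact le_add_of_nonneg_left hA.le
    _ ≤ (S + 1) / A + 1 / B * (2 / (S + 1)) := by
        rw [sum_const, card_range, nsmul_eq_mul, ← mul_sum]
        push_cast
        gcongr
        · exact (mul_one_div _ _).le
        · exact sum_Ioo_inv_sq_le _ _
    _ ≤ (r + 1) / A + 2 / (r * B) := by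
        rw [one_div_mul_eq_div, div_div]
        exact add_le_add (by gcongr) <|
          div_le_div_of_nonneg_left zero_le_two (by positivity)
            (mul_le_mul_of_nonneg_right hrS.le hB.le)
    _ = 1 / A + 3 / q := by
        rw [mul_comm, hBr, ← hrq]
        field_simp
        ring

theorem sum_range_one_div_add_sq_sub_mul_le {A τ a : ℝ} (hA : 0 < A) (hτ : 0 < τ) (ha : 0 ≤ a)
    (N : ℕ) : ∑ k ∈ range N, 1 / (A + (a - k * τ) ^ 2) ≤ 2 / A + 6 / (τ * √A) := by
  set f : ℕ → ℝ := fun k => 1 / (A + (a - k * τ) ^ 2)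
  set L := ⌊a / τ⌋₊
  have hL : L * τ ≤ a := (le_div_iff₀ hτ).1 (Nat.floor_le (div_nonneg ha hτ.le))
  have hL' : a < (L + 1) * τ := (div_lt_iff₀ hτ).1 (Nat.lt_floor_add_one _)
  have hf : ∀ k s : ℕ, τ * s ≤ |a - k * τ| → f k ≤ 1 / (A + τ ^ 2 * s ^ 2) := by
    intro k s h
    have : (τ * s) ^ 2 ≤ (a - k * τ) ^ 2 := by
      simpa only [sq_abs] using pow_le_pow_left₀ (by positivity) h 2
    simp only [f]
    gcongr
    linarith
  have hsum := sum_range_one_div_add_mul_sq_le hA (pow_pos hτ 2)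
  calc ∑ k ∈ range N, f k
      ≤ ∑ k ∈ range (L + 1 + N), f k :=
        sum_le_sum_of_subset_of_nonneg (range_mono (Nat.le_add_left _ _))
          fun _ _ _ => by positivity
    _ = ∑ s ∈ range (L + 1), f (L + 1 - 1 - s) + ∑ s ∈ range N, f (L + 1 + s) := by
        rw [sum_range_add, sum_range_reflect]
    _ ≤ ∑ s ∈ range (L + 1), 1 / (A + τ ^ 2 * s ^ 2)
          + ∑ s ∈ range N, 1 / (A + τ ^ 2 * s ^ 2) := by
        gcongr with s hs s
        · have hsL : s ≤ L := Nat.lt_succ_iff.mp (mem_range.mp hs)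
          refine hf _ _ (le_trans ?_ (le_abs_self _))
          rw [Nat.add_sub_cancel, Nat.cast_sub hsL]
          linarith
        · refine hf _ _ (le_trans ?_ (neg_le_abs _))
          push_cast
          linarith
    _ ≤ 2 * (1 / A + 3 / √(A * τ ^ 2)) := by linarith [hsum (L + 1), hsum N]
    _ = 2 / A + 6 / (τ * √A) := by
        rw [sqrt_mul hA.le, sqrt_sq hτ.le]
        ring

theorem min_mul_add_sq_le_add_mul_sq {n a k τ c : ℝ} (hτ : 1 ≤ τ) (hc : 0 ≤ c) (hn : 0 ≤ n)
    (hk : 1 ≤ k) (ha : n - √n ≤ a) :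
    min (1 / (16 * τ)) (c / 2) * (n + (a - k * τ) ^ 2) ≤ k + c * (a - k * τ) ^ 2 := by
  set δ := min (1 / (16 * τ)) (c / 2)
  have hδ₁ : δ ≤ 1 / (16 * τ) := min_le_left _ _
  have hδ₂ : δ ≤ c / 2 := min_le_right _ _
  by_cases h : n ≤ 16 * (k * τ)
  · have : δ * n ≤ k := by
      calc δ * n ≤ 1 / (16 * τ) * n := by gcongr
        _ ≤ k := by rw [div_mul_eq_mul_div, div_le_iff₀ (by positivity)]; linarith
    nlinarith
  · have h16 : 16 ≤ n := by nlinarith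
    have hsq : √n ^ 2 = n := sq_sqrt hn
    have h4 : 4 ≤ √n := by
      rw [show (4 : ℝ) = √16 by rw [show (16 : ℝ) = 4 ^ 2 by norm_num, sqrt_sq (by norm_num)]]
      exact sqrt_le_sqrt h16
    have hroot : √n ≤ n / 4 := by nlinarith
    have hfar : n / 2 ≤ a - k * τ := by linarith
    have hfar2 : n ≤ (a - k * τ) ^ 2 := by nlinarith
    nlinarith

theorem sum_exp_y_sq_bound (τbar c : ℝ) (hτ : 1 < τbar) (hc : 0 < c) :
    ∃ C : ℝ, 0 < C ∧ ∀ n : ℕ, 1 ≤ n → ∀ m : ℕ, (m : ℝ) ≤ Real.sqrt n →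
      ∑ k ∈ Finset.Icc 1 n,
          (1 / (k : ℝ)) *
            Real.exp (-c * (((n : ℝ) - m - k * τbar) / Real.sqrt k) ^ 2)
        ≤ C / Real.sqrt n := by
  set δ := min (1 / (16 * τbar)) (c / 2)
  have hδ : 0 < δ := lt_min (by positivity) (by positivity)
  refine ⟨(2 + 6 / τbar) / δ, by positivity, fun n hn m hm => ?_⟩
  have hn1 : (1 : ℝ) ≤ n := by exact_mod_cast hn
  have hroot : √n ≤ n := sqrt_le_self_iff.mpr (Or.inr hn1)
  set a : ℝ := n - m
  calc ∑ k ∈ Icc 1 n, 1 / (k : ℝ) * exp (-c * ((a - k * τbar) / √k) ^ 2)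
      ≤ ∑ k ∈ Icc 1 n, δ⁻¹ * (1 / (n + (a - k * τbar) ^ 2)) := by
        refine sum_le_sum fun k hk => ?_
        have hk1 : (1 : ℝ) ≤ k := by exact_mod_cast (mem_Icc.mp hk).1
        refine (one_div_mul_exp_neg_mul_div_sqrt_sq_le (by linarith) hc.le _).trans ?_
        rw [← one_div, one_div_mul_one_div]
        exact one_div_le_one_div_of_le (by positivity)
          (min_mul_add_sq_le_add_mul_sq hτ.le hc.le (by positivity) hk1 (by linarith))
    _ ≤ δ⁻¹ * ∑ k ∈ range (n + 1), 1 / (n + (a - k * τbar) ^ 2) := by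
        rw [← mul_sum]
        gcongr
        exact fun k hk => mem_range.mpr (Nat.lt_succ_of_le (mem_Icc.mp hk).2)
    _ ≤ δ⁻¹ * (2 / n + 6 / (τbar * √n)) := by
        gcongr
        exact sum_range_one_div_add_sq_sub_mul_le (by positivity) (by positivity)
          (by linarith) _
    _ ≤ δ⁻¹ * (2 / √n + 6 / (τbar * √n)) := by gcongr
    _ = (2 + 6 / τbar) / δ / √n := by field_simp
end

section
/- Let τ̄ > 1 and c > 0 and define y_{k,n,m} = (n - m - k τ̄)/√k. There exists a constant C (depending on c and τ̄) such that for all n ≥ 1, sup_{0 ≤ m ≤ √n} ∑_{k=1}^{n} (1/√k) |√(n/(k τ̄)) - 1| e^{-c y_{k,n,m}²} ≤ C/√n. -/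
/-!
Put `z = n - m - k τ̄` and `y = z / √k`. Rationalising,
`(1/√k) |√(n/(k τ̄)) - 1| ≤ |n - k τ̄| / (k √(τ̄ n))`, and since `m ≤ √n` forces
`n ≤ 2|z| + (2τ̄ + 1) k`, this weight is `O((1 + y²)/n)`. Half of the Gaussian factor `e^{-c y²}`
absorbs `1 + y²`; the other half is at most `e^{-(c/2) z²/n}` because `k ≤ n`. So the sum is
`O(1/n)` times a discretised Gaussian of width `√n` in `k τ̄`, whose sum is `O(√n)`: compare
`e^{-u²}` with `e^{1/4 - |u|}` and sum two geometric series on either side of the peak.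
-/

open Finset Real

lemma abs_sqrt_sub_sqrt_le {x y : ℝ} (hx : 0 < x) (hy : 0 ≤ y) : |√x - √y| ≤ |x - y| / √x := by
  rw [le_div_iff₀ (sqrt_pos.2 hx)]
  have hfactor : |x - y| = |√x - √y| * (√x + √y) := by
    rw [← abs_of_nonneg (by positivity : 0 ≤ √x + √y), ← abs_mul]
    congr 1
    nlinarith [sq_sqrt hx.le, sq_sqrt hy]
  rw [hfactor]
  exact mul_le_mul_of_nonneg_left (le_add_of_nonneg_right (sqrt_nonneg y)) (abs_nonneg _)

lemma one_div_sqrt_mul_abs_sqrt_div_sub_one_le {x y τ : ℝ} (hx : 0 < x) (hy : 0 < y)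
    (hτ : 0 < τ) : 1 / √y * |√(x / (y * τ)) - 1| ≤ |x - y * τ| / (y * √τ * √x) := by
  have hyτ : 0 < √(y * τ) := by positivity
  have hquot : √(x / (y * τ)) - 1 = (√x - √(y * τ)) / √(y * τ) := by
    rw [sqrt_div' _ (by positivity)]; field_simp
  rw [hquot, abs_div, abs_of_pos hyτ]
  calc 1 / √y * (|√x - √(y * τ)| / √(y * τ)) ≤ 1 / √y * (|x - y * τ| / √x / √(y * τ)) := by
        gcongr; exact abs_sqrt_sub_sqrt_le hx (by positivity)
    _ = |x - y * τ| / (y * √τ * √x) := by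
        rw [sqrt_mul hy.le]
        field_simp
        rw [sq_sqrt hy.le]

lemma abs_sub_mul_mul_sqrt_le {n k m τ : ℝ} (hτ : 0 ≤ τ) (hk : 1 ≤ k) (hn : 0 ≤ n)
    (hm0 : 0 ≤ m) (hm : m ≤ √n) :
    |n - k * τ| * √n ≤ 3 * (τ + 1) * (k + (n - m - k * τ) ^ 2) := by
  set z := n - m - k * τ
  set r := √n
  have hr : r ^ 2 = n := sq_sqrt hn
  have hr0 : 0 ≤ r := sqrt_nonneg n
  have hshift : |n - k * τ| ≤ |z| + r := by
    calc |n - k * τ| = |z + m| := by congr 1; ring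
      _ ≤ |z| + |m| := abs_add_le _ _
      _ ≤ |z| + r := by rw [abs_of_nonneg hm0]; linarith
  -- `2 m ≤ 2 √n ≤ n + 1`
  have hn_le : n ≤ 2 * |z| + (2 * τ + 1) * k := by
    nlinarith [sq_nonneg (r - 1), le_abs_self z]
  nlinarith [mul_le_mul_of_nonneg_right hshift hr0, sq_nonneg (|z| - r), sq_nonneg (|z| - 1),
    sq_abs z, abs_nonneg z]

lemma exp_neg_sq_le (u : ℝ) : exp (-u ^ 2) ≤ exp (1 / 4) * exp (-|u|) := by
  rw [← exp_add, exp_le_exp]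
  nlinarith [sq_nonneg (|u| - 1 / 2), sq_abs u]

lemma one_add_sq_mul_exp_neg_le {c : ℝ} (hc : 0 < c) (y : ℝ) :
    (1 + y ^ 2) * exp (-c * y ^ 2) ≤ (1 + 2 / c) * exp (-(c / 2) * y ^ 2) := by
  have hpoly : 1 + y ^ 2 ≤ (1 + 2 / c) * exp (c / 2 * y ^ 2) :=
    calc 1 + y ^ 2 ≤ (1 + 2 / c) * (c / 2 * y ^ 2 + 1) := by
          field_simp; nlinarith [sq_nonneg (y * c)]
      _ ≤ _ := by gcongr; exact add_one_le_exp _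
  calc (1 + y ^ 2) * exp (-c * y ^ 2)
      ≤ (1 + 2 / c) * exp (c / 2 * y ^ 2) * exp (-c * y ^ 2) := by gcongr
    _ = _ := by rw [mul_assoc, ← exp_add]; ring_nf

lemma inv_one_sub_exp_neg_le {r : ℝ} (hr : 0 < r) : (1 - exp (-r))⁻¹ ≤ 1 + r⁻¹ := by
  have hlow : r / (1 + r) ≤ 1 - exp (-r) := by
    have : (exp r)⁻¹ ≤ (1 + r)⁻¹ := inv_anti₀ (by positivity) (by linarith [add_one_le_exp r])
    rw [exp_neg]
    have : r / (1 + r) = 1 - (1 + r)⁻¹ := by field_simp; ring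
    linarith
  calc (1 - exp (-r))⁻¹ ≤ (r / (1 + r))⁻¹ := inv_anti₀ (by positivity) hlow
    _ = 1 + r⁻¹ := by field_simp; ring

lemma sum_exp_neg_mul_abs_sub_le {r : ℝ} (hr : 0 < r) (t : ℝ) (s : Finset ℕ) :
    ∑ k ∈ s, exp (-(r * |k - t|)) ≤ 2 * (1 - exp (-r))⁻¹ := by
  set q := exp (-r)
  have hq1 : q < 1 := exp_lt_one_iff.2 (by linarith)
  have hgeom (L : ℕ) : ∑ j ∈ range L, q ^ j ≤ (1 - q)⁻¹ := by
    have := geom_sum_Ico_le_of_lt_one (m := 0) (n := L) (exp_pos _).le hq1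
    rwa [← range_eq_Ico, pow_zero, one_div] at this
  have hle {x : ℝ} (j : ℕ) (h : (j : ℝ) ≤ |x - t|) : exp (-(r * |x - t|)) ≤ q ^ j := by
    rw [← exp_nat_mul, exp_le_exp]
    nlinarith
  set M := ⌈t⌉₊
  set N := s.sup id + 1
  have hsub : s ⊆ range (M + N) := fun k hk => by
    have : k ≤ s.sup id := le_sup (f := id) hk
    simp only [mem_range]; omega
  calc ∑ k ∈ s, exp (-(r * |k - t|)) ≤ ∑ k ∈ range (M + N), exp (-(r * |k - t|)) :=
        sum_le_sum_of_subset_of_nonneg hsub fun _ _ _ => (exp_pos _).le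
    _ = ∑ k ∈ range M, exp (-(r * |k - t|))
          + ∑ j ∈ range N, exp (-(r * |((M + j : ℕ) : ℝ) - t|)) := sum_range_add _ _ _
    _ ≤ ∑ k ∈ range M, q ^ (M - 1 - k) + ∑ j ∈ range N, q ^ j := by
        gcongr with k hk j
        · have hkt : (k : ℝ) < t := Nat.lt_ceil.1 (mem_range.1 hk)
          have hMt : (M : ℝ) < t + 1 := Nat.ceil_lt_add_one (by linarith [k.cast_nonneg (α := ℝ)])
          apply hle
          rw [Nat.sub_sub, Nat.cast_sub (by simp at hk; omega), abs_of_neg (by linarith)]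
          push_cast; linarith
        · apply hle
          rw [abs_of_nonneg (by push_cast; linarith [Nat.le_ceil t, j.cast_nonneg (α := ℝ)])]
          push_cast; linarith [Nat.le_ceil t]
    _ = ∑ j ∈ range M, q ^ j + ∑ j ∈ range N, q ^ j := by rw [sum_range_reflect (q ^ ·) M]
    _ ≤ (1 - q)⁻¹ + (1 - q)⁻¹ := add_le_add (hgeom M) (hgeom N)
    _ = 2 * (1 - q)⁻¹ := by ring

lemma sum_exp_neg_mul_sq_le {b τ L : ℝ} (hb : 0 < b) (hτ : 0 < τ) (hL : 1 ≤ L) (t : ℝ)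
    (s : Finset ℕ) :
    ∑ k ∈ s, exp (-b * ((t - k * τ) / L) ^ 2) ≤ 2 * exp (1 / 4) * (1 + (√b * τ)⁻¹) * L := by
  set r := √b * τ / L
  have hr : 0 < r := by positivity
  have hterm (k : ℕ) :
      exp (-b * ((t - k * τ) / L) ^ 2) ≤ exp (1 / 4) * exp (-(r * |k - t / τ|)) := by
    have hu : √b * ((t - k * τ) / L) = -(r * (k - t / τ)) := by
      simp only [r]; field_simp; ring
    have := exp_neg_sq_le (√b * ((t - k * τ) / L))
    rwa [mul_pow, sq_sqrt hb.le, hu, abs_neg, abs_mul, abs_of_pos hr, ← neg_mul] at this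
  calc ∑ k ∈ s, exp (-b * ((t - k * τ) / L) ^ 2)
      ≤ ∑ k ∈ s, exp (1 / 4) * exp (-(r * |k - t / τ|)) := sum_le_sum fun k _ => hterm k
    _ ≤ exp (1 / 4) * (2 * (1 + r⁻¹)) := by
        rw [← mul_sum]
        gcongr
        exact (sum_exp_neg_mul_abs_sub_le hr _ s).trans
          (by gcongr; exact inv_one_sub_exp_neg_le hr)
    _ ≤ 2 * exp (1 / 4) * (1 + (√b * τ)⁻¹) * L := by
        have : 1 + r⁻¹ ≤ (1 + (√b * τ)⁻¹) * L := by
          simp only [r, inv_div]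
          rw [add_mul, div_eq_inv_mul, one_mul]
          gcongr
        nlinarith [exp_pos (1 / 4 : ℝ)]

lemma summand_le_gaussian {n k m τ c : ℝ} (hτ : 0 < τ) (hc : 0 < c) (hk : 1 ≤ k) (hkn : k ≤ n)
    (hm0 : 0 ≤ m) (hm : m ≤ √n) :
    1 / √k * |√(n / (k * τ)) - 1| * exp (-c * ((n - m - k * τ) / √k) ^ 2)
      ≤ 3 * (τ + 1) * (1 + 2 / c) / √τ / n * exp (-(c / 2) * ((n - m - k * τ) / √n) ^ 2) := by
  have hk0 : 0 < k := by linarith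
  have hn0 : 0 < n := by linarith
  set z := n - m - k * τ
  have hweight : 1 / √k * |√(n / (k * τ)) - 1| ≤ 3 * (τ + 1) / √τ / n * (1 + (z / √k) ^ 2) :=
    calc 1 / √k * |√(n / (k * τ)) - 1| ≤ |n - k * τ| / (k * √τ * √n) :=
          one_div_sqrt_mul_abs_sqrt_div_sub_one_le hn0 hk0 hτ
      _ = |n - k * τ| * √n / (k * √τ * n) := by
          field_simp; rw [sq_sqrt hn0.le]; ring
      _ ≤ 3 * (τ + 1) * (k + z ^ 2) / (k * √τ * n) :=
          div_le_div_of_nonneg_right (abs_sub_mul_mul_sqrt_le hτ.le hk hn0.le hm0 hm)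
            (by positivity)
      _ = 3 * (τ + 1) / √τ / n * (1 + (z / √k) ^ 2) := by
          rw [div_pow, sq_sqrt hk0.le]; field_simp
  have hspread : (z / √n) ^ 2 ≤ (z / √k) ^ 2 := by
    rw [div_pow, div_pow, sq_sqrt hn0.le, sq_sqrt hk0.le]
    gcongr
  calc 1 / √k * |√(n / (k * τ)) - 1| * exp (-c * (z / √k) ^ 2)
      ≤ 3 * (τ + 1) / √τ / n * ((1 + (z / √k) ^ 2) * exp (-c * (z / √k) ^ 2)) := by
        rw [← mul_assoc]
        exact mul_le_mul_of_nonneg_right hweight (exp_pos _).le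
    _ ≤ 3 * (τ + 1) / √τ / n * ((1 + 2 / c) * exp (-(c / 2) * (z / √k) ^ 2)) := by
        gcongr ?_ * ?_
        exact one_add_sq_mul_exp_neg_le hc _
    _ ≤ 3 * (τ + 1) / √τ / n * ((1 + 2 / c) * exp (-(c / 2) * (z / √n) ^ 2)) := by
        gcongr _ * (_ * exp ?_)
        exact mul_le_mul_of_nonpos_left hspread (by linarith)
    _ = 3 * (τ + 1) * (1 + 2 / c) / √τ / n * exp (-(c / 2) * (z / √n) ^ 2) := by ring

theorem sum_sqrt_diff_exp_bound (τbar c : ℝ) (hτ : 1 < τbar) (hc : 0 < c) :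
    ∃ C : ℝ, 0 < C ∧ ∀ n : ℕ, 1 ≤ n → ∀ m : ℕ, (m : ℝ) ≤ Real.sqrt n →
      ∑ k ∈ Finset.Icc 1 n,
          (1 / Real.sqrt k) * |Real.sqrt ((n : ℝ) / (k * τbar)) - 1| *
            Real.exp (-c * (((n : ℝ) - m - k * τbar) / Real.sqrt k) ^ 2)
        ≤ C / Real.sqrt n := by
  have hτ0 : 0 < τbar := by linarith
  set A := 3 * (τbar + 1) * (1 + 2 / c) / √τbar
  set G := 2 * exp (1 / 4) * (1 + (√(c / 2) * τbar)⁻¹)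
  refine ⟨A * G, by positivity, fun n hn m hm => ?_⟩
  have hn0 : (0 : ℝ) < n := by exact_mod_cast hn
  calc ∑ k ∈ Icc 1 n,
        1 / √k * |√(n / (k * τbar)) - 1| * exp (-c * ((n - m - k * τbar) / √k) ^ 2)
      ≤ ∑ k ∈ Icc 1 n, A / n * exp (-(c / 2) * ((n - m - k * τbar) / √n) ^ 2) := by
        refine sum_le_sum fun k hk => ?_
        obtain ⟨hk1, hkn⟩ := mem_Icc.1 hk
        exact summand_le_gaussian (k := k) hτ0 hc (by exact_mod_cast hk1) (by exact_mod_cast hkn)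
          m.cast_nonneg hm
    _ ≤ A / n * (G * √n) := by
        rw [← mul_sum]
        gcongr
        exact sum_exp_neg_mul_sq_le (by positivity) hτ0 (one_le_sqrt.2 (by exact_mod_cast hn)) _ _
    _ = A * G / √n := by
        rw [eq_div_iff (by positivity)]
        field_simp
        rw [sq_sqrt hn0.le]
        ring
end

section
/- Let Φ denote the standard normal CDF. For all real numbers a ≥ 1, b, and t, |Φ(at + b) - Φ(t)| ≤ |b|/√(2π) + (a - 1)/√(2πe). -/
open MeasureTheory

noncomputable def gaussφ (u : ℝ) : ℝ := Real.exp (-u ^ 2 / 2) / Real.sqrt (2 * Real.pi)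

lemma gaussφ_integrable : Integrable gaussφ := by
  have h := (integrable_exp_neg_mul_sq (by norm_num : (0:ℝ) < 1/2)).mul_const
    (Real.sqrt (2 * Real.pi))⁻¹
  have : gaussφ = fun u => Real.exp (-(1/2) * u ^ 2) * (Real.sqrt (2 * Real.pi))⁻¹ := by
    funext u
    simp only [gaussφ, div_eq_mul_inv]
    ring_nf
  rw [this]; exact h

lemma gaussφ_nonneg (u : ℝ) : 0 ≤ gaussφ u :=
  div_nonneg (Real.exp_pos _).le (Real.sqrt_nonneg _)

lemma diff_eq (Φ : ℝ → ℝ)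
    (hΦ : ∀ x : ℝ, Φ x = ∫ u in Set.Iic x, Real.exp (-u ^ 2 / 2) / Real.sqrt (2 * Real.pi))
    (x y : ℝ) : Φ y - Φ x = ∫ u in x..y, gaussφ u := by
  rw [hΦ, hΦ]
  exact intervalIntegral.integral_Iic_sub_Iic gaussφ_integrable.integrableOn
    gaussφ_integrable.integrableOn

lemma bound (Φ : ℝ → ℝ)
    (hΦ : ∀ x : ℝ, Φ x = ∫ u in Set.Iic x, Real.exp (-u ^ 2 / 2) / Real.sqrt (2 * Real.pi))
    (x y C : ℝ) (hC : ∀ u ∈ Set.uIoc x y, gaussφ u ≤ C) :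
    |Φ y - Φ x| ≤ C * |y - x| := by
  rw [diff_eq Φ hΦ, ← Real.norm_eq_abs]
  exact intervalIntegral.norm_integral_le_of_norm_le_const fun u hu => by
    rw [Real.norm_eq_abs, abs_of_nonneg (gaussφ_nonneg u)]; exact hC u hu

lemma key (u : ℝ) : |u| * Real.exp (-u ^ 2 / 2) ≤ Real.exp (-1/2) := by
  have h : |u| ≤ Real.exp (u^2/2 - 1/2) := by
    calc |u| ≤ (u^2+1)/2 := by nlinarith [sq_nonneg (|u|-1), sq_abs u]
      _ ≤ _ := by have := Real.add_one_le_exp (u^2/2 - 1/2); linarith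
  calc |u| * Real.exp (-u ^ 2 / 2) ≤ Real.exp (u^2/2 - 1/2) * Real.exp (-u^2/2) :=
        mul_le_mul_of_nonneg_right h (Real.exp_pos _).le
    _ = Real.exp (-1/2) := by rw [← Real.exp_add]; congr 1; ring

theorem gaussian_cdf_shift_scale (Φ : ℝ → ℝ)
    (hΦ : ∀ x : ℝ, Φ x = ∫ u in Set.Iic x, Real.exp (-u ^ 2 / 2) / Real.sqrt (2 * Real.pi))
    (a b t : ℝ) (ha : 1 ≤ a) :
    |Φ (a * t + b) - Φ t|
      ≤ |b| / Real.sqrt (2 * Real.pi) + (a - 1) / Real.sqrt (2 * Real.pi * Real.exp 1) := by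
  have hs : (0:ℝ) < Real.sqrt (2 * Real.pi) := Real.sqrt_pos.2 (by positivity)
  have h1 : |Φ (a * t + b) - Φ (a * t)| ≤ |b| / Real.sqrt (2 * Real.pi) := by
    have hb1 := bound Φ hΦ (a * t) (a * t + b) (Real.sqrt (2 * Real.pi))⁻¹ (fun u _ => by
      simp only [gaussφ, div_eq_mul_inv]
      apply mul_le_of_le_one_left (by positivity)
      exact Real.exp_le_one_iff.2 (by nlinarith [sq_nonneg u]))
    have he : a * t + b - a * t = b := by ring
    rw [he, inv_mul_eq_div] at hb1
    exact hb1
  have h2 : |Φ (a * t) - Φ t| ≤ (Real.exp (-t^2/2) / Real.sqrt (2 * Real.pi)) * (|t| * (a - 1)) := by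
    have hb2 := bound Φ hΦ t (a * t) (Real.exp (-t^2/2) / Real.sqrt (2 * Real.pi)) (fun u hu => by
      have hu2 : t^2 ≤ u^2 := by
        rcases le_or_gt 0 t with h0 | h0
        · have hle : t ≤ a * t := by nlinarith
          rw [Set.uIoc_of_le hle] at hu
          nlinarith [hu.1, hu.2]
        · have hle : a * t ≤ t := by nlinarith
          rw [Set.uIoc_of_ge hle] at hu
          nlinarith [hu.1, hu.2]
      simp only [gaussφ]
      gcongr)
    have he : |a * t - t| = |t| * (a - 1) := by
      rw [show a * t - t = t * (a - 1) by ring, abs_mul,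
        abs_of_nonneg (by linarith : (0:ℝ) ≤ a - 1)]
    rw [he] at hb2
    exact hb2
  have h3 : (Real.exp (-t^2/2) / Real.sqrt (2 * Real.pi)) * (|t| * (a - 1))
      ≤ (a - 1) / Real.sqrt (2 * Real.pi * Real.exp 1) := by
    have he : Real.sqrt (2 * Real.pi * Real.exp 1)
        = Real.sqrt (2 * Real.pi) * Real.exp (1/2 : ℝ) := by
      rw [Real.sqrt_mul (by positivity)]
      congr 1
      rw [Real.sqrt_eq_rpow, Real.exp_one_rpow]
    have hexp : Real.exp (-1/2 : ℝ) * Real.exp (1/2 : ℝ) = 1 := by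
      rw [← Real.exp_add]; norm_num
    rw [he, div_mul_eq_mul_div, div_le_div_iff₀ hs (by positivity)]
    have hnn : (0:ℝ) ≤ (a - 1) * Real.sqrt (2 * Real.pi) * Real.exp (1/2 : ℝ) :=
      mul_nonneg (mul_nonneg (by linarith) hs.le) (Real.exp_pos _).le
    have hmul := mul_le_mul_of_nonneg_right (key t) hnn
    nlinarith [hmul, Real.exp_pos (-t^2/2), Real.exp_pos (1/2 : ℝ), hs]
  calc |Φ (a * t + b) - Φ t|
      = |(Φ (a * t + b) - Φ (a * t)) + (Φ (a * t) - Φ t)| := by ring_nf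
    _ ≤ |Φ (a * t + b) - Φ (a * t)| + |Φ (a * t) - Φ t| := abs_add_le _ _
    _ ≤ |b| / Real.sqrt (2 * Real.pi)
        + (Real.exp (-t^2/2) / Real.sqrt (2 * Real.pi)) * (|t| * (a - 1)) := add_le_add h1 h2
    _ ≤ _ := add_le_add le_rfl h3
end
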